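/- arXiv:1707.02702 — 5 statements merged into one kernel-verified Lean document; each statement's English description precedes it below -/
import Mathlib

section
/- Sequential composition of Pufferfish with near-independence correction: Let $M_A$ and $M_B$ be mechanisms with discrete output spaces such that $M_A$ is $\epsilon_A$-Pufferfish private and $M_B$ is $\epsilon_B$-Pufferfish private in a framework $(\mathcal{S}, \mathcal{Q}, \Theta)$. Suppose there exists $E \ge 0$ such that for all secrets $s \in \mathcal{S}$ and all $\theta \in \Theta$, the max-divergence between the joint distribution $P(M_A(X), M_B(X) \mid s, \theta)$ and the product of marginals $P(M_A(X) \mid s, \theta) \cdot P(M_B(X) \mid s, \theta)$ is at most $E$ in both directions. Then releasing the pair $(M_A(X), M_B(X))$ satisfies $(\epsilon_A + \epsilon_B + 2E)$-Pufferfish privacy in $(\mathcal{S}, \mathcal{Q}, \Theta)$. -/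
/-- `ε`-Pufferfish privacy for a mechanism with likelihood function `L w s θ`
(probability that the output is `w` given secret `s` and data distribution `θ`),
framework `(S, Q, Θ)` with secret-positivity predicate `pos`. -/
def PufferfishPrivate {Secret Theta Output : Type*}
    (Q : Set (Secret × Secret)) (Θ : Set Theta)
    (pos : Secret → Theta → Prop)
    (L : Output → Secret → Theta → ℝ) (ε : ℝ) : Prop :=
  ∀ s ∈ Q, ∀ θ ∈ Θ, pos s.1 θ → pos s.2 θ → ∀ w : Output,
    Real.exp (-ε) ≤ L w s.1 θ / L w s.2 θ ∧ L w s.1 θ / L w s.2 θ ≤ Real.exp ε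

/-! The two-sided ratio bound `e^{-ε} ≤ p₁/p₂ ≤ e^ε` is the one-sided bound `p ≤ e^ε q` for
both orderings of the pair, so it suffices to bound the joint likelihood from above: chaining
`P(a,b | s₁) ≤ e^E P(a|s₁) P(b|s₁) ≤ e^{E+ε_A+ε_B} P(a|s₂) P(b|s₂) ≤ e^{2E+ε_A+ε_B} P(a,b | s₂)`. -/

open Real

theorem exp_neg_le_div_and_div_le_exp_iff {a b ε : ℝ} (hb : 0 < b) :
    (exp (-ε) ≤ a / b ∧ a / b ≤ exp ε) ↔ (b ≤ exp ε * a ∧ a ≤ exp ε * b) := by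
  rw [le_div_iff₀ hb, div_le_iff₀ hb, exp_neg, inv_mul_le_iff₀ (exp_pos ε)]

theorem le_exp_mul_of_near_indep {a₁ a₂ b₁ b₂ j₁ j₂ εA εB E : ℝ}
    (ha₂ : 0 ≤ a₂) (hb₁ : 0 ≤ b₁)
    (hA : a₁ ≤ exp εA * a₂) (hB : b₁ ≤ exp εB * b₂)
    (hj₁ : j₁ ≤ exp E * (a₁ * b₁)) (hj₂ : a₂ * b₂ ≤ exp E * j₂) :
    j₁ ≤ exp (εA + εB + 2 * E) * j₂ :=
  calc j₁ ≤ exp E * (a₁ * b₁) := hj₁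
    _ ≤ exp E * ((exp εA * a₂) * (exp εB * b₂)) := by gcongr
    _ = exp E * exp εA * exp εB * (a₂ * b₂) := by ring
    _ ≤ exp E * exp εA * exp εB * (exp E * j₂) := by gcongr
    _ = exp (εA + εB + 2 * E) * j₂ := by
      rw [show εA + εB + 2 * E = E + εA + εB + E by ring, exp_add, exp_add, exp_add]
      ring

theorem pufferfish_sequential_composition_general {Secret Theta OutA OutB : Type*}
    (S : Set Secret) (Q : Set (Secret × Secret)) (Θ : Set Theta)
    (pos : Secret → Theta → Prop)
    (LA : OutA → Secret → Theta → ℝ) (LB : OutB → Secret → Theta → ℝ)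
    (LJ : OutA × OutB → Secret → Theta → ℝ)
    (εA εB E : ℝ)
    (hQS : ∀ s ∈ Q, s.1 ∈ S ∧ s.2 ∈ S)
    (hLApos : ∀ (w : OutA) (s : Secret) (θ : Theta), s ∈ S → θ ∈ Θ → pos s θ → 0 < LA w s θ)
    (hLBpos : ∀ (w : OutB) (s : Secret) (θ : Theta), s ∈ S → θ ∈ Θ → pos s θ → 0 < LB w s θ)
    (hLJpos : ∀ (w : OutA × OutB) (s : Secret) (θ : Theta), s ∈ S → θ ∈ Θ → pos s θ → 0 < LJ w s θ)
    (hA : PufferfishPrivate Q Θ pos LA εA)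
    (hB : PufferfishPrivate Q Θ pos LB εB)
    (hdiv1 : ∀ s ∈ S, ∀ θ ∈ Θ, pos s θ → ∀ (w1 : OutA) (w2 : OutB),
      LJ (w1, w2) s θ ≤ Real.exp E * (LA w1 s θ * LB w2 s θ))
    (hdiv2 : ∀ s ∈ S, ∀ θ ∈ Θ, pos s θ → ∀ (w1 : OutA) (w2 : OutB),
      LA w1 s θ * LB w2 s θ ≤ Real.exp E * LJ (w1, w2) s θ) :
    PufferfishPrivate Q Θ pos LJ (εA + εB + 2 * E) := by
  rintro s hs θ hθ h₁ h₂ ⟨w₁, w₂⟩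
  obtain ⟨hs₁, hs₂⟩ := hQS s hs
  obtain ⟨hA₂₁, hA₁₂⟩ := (exp_neg_le_div_and_div_le_exp_iff (hLApos w₁ s.2 θ hs₂ hθ h₂)).1
    (hA s hs θ hθ h₁ h₂ w₁)
  obtain ⟨hB₂₁, hB₁₂⟩ := (exp_neg_le_div_and_div_le_exp_iff (hLBpos w₂ s.2 θ hs₂ hθ h₂)).1
    (hB s hs θ hθ h₁ h₂ w₂)
  refine (exp_neg_le_div_and_div_le_exp_iff (hLJpos (w₁, w₂) s.2 θ hs₂ hθ h₂)).2 ⟨?_, ?_⟩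
  · exact le_exp_mul_of_near_indep (hLApos w₁ s.1 θ hs₁ hθ h₁).le
      (hLBpos w₂ s.2 θ hs₂ hθ h₂).le hA₂₁ hB₂₁
      (hdiv1 s.2 hs₂ θ hθ h₂ w₁ w₂) (hdiv2 s.1 hs₁ θ hθ h₁ w₁ w₂)
  · exact le_exp_mul_of_near_indep (hLApos w₁ s.2 θ hs₂ hθ h₂).le
      (hLBpos w₂ s.1 θ hs₁ hθ h₁).le hA₁₂ hB₁₂
      (hdiv1 s.1 hs₁ θ hθ h₁ w₁ w₂) (hdiv2 s.2 hs₂ θ hθ h₂ w₁ w₂)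

/-- **Sequential composition with near-independence correction**: if `M_A` is
`ε_A`-Pufferfish private, `M_B` is `ε_B`-Pufferfish private, and for every secret
and every `θ` the max-divergence between the joint output distribution and the
product of the marginals is at most `E` in both directions, then the joint release
is `(ε_A + ε_B + 2E)`-Pufferfish private. -/
theorem pufferfish_sequential_composition {Secret Theta OutA OutB : Type*}
    (S : Set Secret) (Q : Set (Secret × Secret)) (Θ : Set Theta)
    (pos : Secret → Theta → Prop)
    (LA : OutA → Secret → Theta → ℝ) (LB : OutB → Secret → Theta → ℝ)
    (LJ : OutA × OutB → Secret → Theta → ℝ)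
    (εA εB E : ℝ) (hεA : 0 ≤ εA) (hεB : 0 ≤ εB) (hE : 0 ≤ E)
    (hQS : ∀ s ∈ Q, s.1 ∈ S ∧ s.2 ∈ S)
    (hLApos : ∀ (w : OutA) (s : Secret) (θ : Theta), s ∈ S → θ ∈ Θ → pos s θ → 0 < LA w s θ)
    (hLBpos : ∀ (w : OutB) (s : Secret) (θ : Theta), s ∈ S → θ ∈ Θ → pos s θ → 0 < LB w s θ)
    (hLJpos : ∀ (w : OutA × OutB) (s : Secret) (θ : Theta), s ∈ S → θ ∈ Θ → pos s θ → 0 < LJ w s θ)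
    (hA : PufferfishPrivate Q Θ pos LA εA)
    (hB : PufferfishPrivate Q Θ pos LB εB)
    (hdiv1 : ∀ s ∈ S, ∀ θ ∈ Θ, pos s θ → ∀ (w1 : OutA) (w2 : OutB),
      LJ (w1, w2) s θ ≤ Real.exp E * (LA w1 s θ * LB w2 s θ))
    (hdiv2 : ∀ s ∈ S, ∀ θ ∈ Θ, pos s θ → ∀ (w1 : OutA) (w2 : OutB),
      LA w1 s θ * LB w2 s θ ≤ Real.exp E * LJ (w1, w2) s θ) :
    PufferfishPrivate Q Θ pos LJ (εA + εB + 2 * E) :=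
  pufferfish_sequential_composition_general S Q Θ pos LA LB LJ εA εB E hQS hLApos hLBpos hLJpos hA
    hB hdiv1 hdiv2
end

section
/- If two mechanisms $M_A, M_B$ produce outputs that are conditionally independent given the secret and the data distribution, and $M_A$ is $\epsilon_A$-Pufferfish private and $M_B$ is $\epsilon_B$-Pufferfish private in framework $(\mathcal{S}, \mathcal{Q}, \Theta)$, then releasing $(M_A(X), M_B(X))$ is $(\epsilon_A + \epsilon_B)$-Pufferfish private in $(\mathcal{S}, \mathcal{Q}, \Theta)$. -/
open Real

theorem exp_neg_le_mul_and_mul_le_exp {a b εa εb : ℝ}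
    (ha : exp (-εa) ≤ a ∧ a ≤ exp εa) (hb : exp (-εb) ≤ b ∧ b ≤ exp εb) :
    exp (-(εa + εb)) ≤ a * b ∧ a * b ≤ exp (εa + εb) := by
  rw [neg_add, exp_add, exp_add]
  exact ⟨mul_le_mul ha.1 hb.1 (exp_pos _).le ((exp_pos _).le.trans ha.1),
    mul_le_mul ha.2 hb.2 ((exp_pos _).le.trans hb.1) (exp_pos _).le⟩

theorem PufferfishPrivate.mul {Secret Theta OutA OutB : Type*}
    {Q : Set (Secret × Secret)} {Θ : Set Theta} {pos : Secret → Theta → Prop}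
    {LA : OutA → Secret → Theta → ℝ} {LB : OutB → Secret → Theta → ℝ} {εA εB : ℝ}
    (hA : PufferfishPrivate Q Θ pos LA εA) (hB : PufferfishPrivate Q Θ pos LB εB) :
    PufferfishPrivate Q Θ pos (fun (w : OutA × OutB) s θ => LA w.1 s θ * LB w.2 s θ)
      (εA + εB) := by
  intro s hs θ hθ h1 h2 w
  -- the likelihood ratio of the joint release is the product of the two ratios
  rw [← div_mul_div_comm]
  exact exp_neg_le_mul_and_mul_le_exp (hA s hs θ hθ h1 h2 w.1) (hB s hs θ hθ h1 h2 w.2)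

theorem pufferfish_composition_indep_general {Secret Theta OutA OutB : Type*}
    (S : Set Secret) (Q : Set (Secret × Secret)) (Θ : Set Theta)
    (pos : Secret → Theta → Prop)
    (LA : OutA → Secret → Theta → ℝ) (LB : OutB → Secret → Theta → ℝ)
    (LJ : OutA × OutB → Secret → Theta → ℝ)
    (εA εB : ℝ)
    (hQS : ∀ s ∈ Q, s.1 ∈ S ∧ s.2 ∈ S)
    (hA : PufferfishPrivate Q Θ pos LA εA)
    (hB : PufferfishPrivate Q Θ pos LB εB)
    (hindep : ∀ s ∈ S, ∀ θ ∈ Θ, pos s θ → ∀ (w1 : OutA) (w2 : OutB),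
      LJ (w1, w2) s θ = LA w1 s θ * LB w2 s θ) :
    PufferfishPrivate Q Θ pos LJ (εA + εB) := by
  rintro s hs θ hθ h1 h2 ⟨w1, w2⟩
  obtain ⟨hs1, hs2⟩ := hQS s hs
  rw [hindep s.1 hs1 θ hθ h1, hindep s.2 hs2 θ hθ h2]
  exact (hA.mul hB) s hs θ hθ h1 h2 (w1, w2)

/-- **Sequential composition under conditional independence**: if the outputs of
`M_A` and `M_B` are conditionally independent given the secret and the data
distribution, and `M_A` is `ε_A`- and `M_B` is `ε_B`-Pufferfish private, then
releasing both is `(ε_A + ε_B)`-Pufferfish private. -/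
theorem pufferfish_composition_indep {Secret Theta OutA OutB : Type*}
    (S : Set Secret) (Q : Set (Secret × Secret)) (Θ : Set Theta)
    (pos : Secret → Theta → Prop)
    (LA : OutA → Secret → Theta → ℝ) (LB : OutB → Secret → Theta → ℝ)
    (LJ : OutA × OutB → Secret → Theta → ℝ)
    (εA εB : ℝ) (hεA : 0 ≤ εA) (hεB : 0 ≤ εB)
    (hQS : ∀ s ∈ Q, s.1 ∈ S ∧ s.2 ∈ S)
    (hLApos : ∀ (w : OutA) (s : Secret) (θ : Theta), s ∈ S → θ ∈ Θ → pos s θ → 0 < LA w s θ)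
    (hLBpos : ∀ (w : OutB) (s : Secret) (θ : Theta), s ∈ S → θ ∈ Θ → pos s θ → 0 < LB w s θ)
    (hA : PufferfishPrivate Q Θ pos LA εA)
    (hB : PufferfishPrivate Q Θ pos LB εB)
    (hindep : ∀ s ∈ S, ∀ θ ∈ Θ, pos s θ → ∀ (w1 : OutA) (w2 : OutB),
      LJ (w1, w2) s θ = LA w1 s θ * LB w2 s θ) :
    PufferfishPrivate Q Θ pos LJ (εA + εB) :=
  pufferfish_composition_indep_general S Q Θ pos LA LB LJ εA εB hQS hA hB hindep
end

section
/- Parallel composition for Pufferfish on Markov chains (general mechanisms): Let $X = (X_1, \ldots, X_T)$ be a Markov chain with finite state space $[k]$ and distribution $\theta \in \Theta$. Let $X^A = (X_{T_1}, \ldots, X_{T_2})$ and $X^B = (X_{T_3}, \ldots, X_{T_4})$ with $T_1 < T_2 < T_3 < T_4$. Suppose $M_A(X^A)$ is $\epsilon_A$-Pufferfish private for the secrets about the values of nodes in $[T_1, T_2]$, and $M_B(X^B)$ is $\epsilon_B$-Pufferfish private for the secrets about nodes in $[T_3, T_4]$. Then for any secret pair about a node $X_i$ with $T_1 \le i \le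 T_2$, any outputs $w_A, w_B$, and any $\theta \in \Theta$: $\frac{P(M_A(X^A)=w_A, M_B(X^B)=w_B \mid X_i = a, \theta)}{P(M_A(X^A)=w_A, M_B(X^B)=w_B \mid X_i = b, \theta)} \le \min\{e^{\epsilon_A + \epsilon_B}, e^{\epsilon_A + e_\Theta(X_{T_3} \mid X_{T_2})}\}$, where $e_\Theta(X_{T_3} \mid X_{T_2})$ is the max-influence of $X_{T_2}$ on $X_{T_3}$ over $\Theta$. The symmetric bound with $\epsilon_B + e_\Theta(X_{T_2} \mid X_{T_3})$ holds for secrets about nodes in $[T_3, T_4]$. -/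
/-! Conditioning on the boundary node `X_{T2}` separates the two mechanisms: by the Markov
property, `P(M_A = w_A, M_B = w_B | X_i = e)` is a mixture over `c` of
`P(M_A = w_A, X_{T2} = c | X_i = e)` against `V c = P(M_B = w_B | X_{T2} = c)`. Privacy of
`M_A` bounds the ratio of the total weights by `exp ε_A`, and `V` varies by at most the factor
`min (exp ε_B) (exp e_Θ(X_{T3} | X_{T2}))`, because `V c` is itself the average over
`d ~ P(X_{T3} = d | X_{T2} = c)` of the likelihoods of `M_B` given `X_{T3} = d`. Secrets in
`[T3, T4]` are handled by the mirror-image argument through `X_{T3}`. -/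

open Finset

/-- Joint probability of a full trajectory of a Markov chain with initial
distribution `q` and transition kernel `P`: nodes are `X_0, …, X_T`. -/
noncomputable def jp {k T : ℕ} (q : Fin k → ℝ) (P : Fin k → Fin k → ℝ)
    (x : Fin (T + 1) → Fin k) : ℝ :=
  q (x 0) * ∏ t : Fin T, P (x t.castSucc) (x t.succ)

/-- Marginal probability `P(X_i = a)`. -/
noncomputable def margNode {k T : ℕ} (q : Fin k → ℝ) (P : Fin k → Fin k → ℝ)
    (i : Fin (T + 1)) (a : Fin k) : ℝ :=
  ∑ x ∈ univ.filter (fun x : Fin (T + 1) → Fin k => x i = a), jp q P x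

/-- Conditional probability (density) of a mechanism output with likelihood `L`
given `X_i = a`: `P(M(X) = w | X_i = a)` where `L x = P(M(X) = w | X = x)`. -/
noncomputable def condOut {k T : ℕ} (q : Fin k → ℝ) (P : Fin k → Fin k → ℝ)
    (L : (Fin (T + 1) → Fin k) → ℝ) (i : Fin (T + 1)) (a : Fin k) : ℝ :=
  (∑ x ∈ univ.filter (fun x : Fin (T + 1) → Fin k => x i = a), jp q P x * L x)
    / margNode q P i a

/-- Conditional probability `P(X_j = c | X_i = a)`. -/
noncomputable def condTrans {k T : ℕ} (q : Fin k → ℝ) (P : Fin k → Fin k → ℝ)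
    (j i : Fin (T + 1)) (c a : Fin k) : ℝ :=
  (∑ x ∈ univ.filter (fun x : Fin (T + 1) → Fin k => x i = a ∧ x j = c), jp q P x)
    / margNode q P i a

lemma sum_mul_le_mul_mul_sum_mul {ι : Type*} [Fintype ι] {u v V : ι → ℝ} {ρ K : ℝ}
    (hu : ∀ c, 0 ≤ u c) (hv : ∀ c, 0 ≤ v c) (hV : ∀ c, 0 ≤ V c) (hK : 0 ≤ K)
    (hVK : ∀ c c', u c ≠ 0 → v c' ≠ 0 → V c ≤ K * V c')
    (huv : ∑ c, u c ≤ ρ * ∑ c, v c) :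
    ∑ c, u c * V c ≤ ρ * K * ∑ c, v c * V c := by
  have hvV : 0 ≤ ∑ c, v c * V c := sum_nonneg fun c _ => mul_nonneg (hv c) (hV c)
  have hcross : (∑ c, u c * V c) * ∑ c, v c ≤ K * (∑ c, u c) * ∑ c, v c * V c := by
    rw [sum_mul_sum, mul_sum _ _ K, sum_mul_sum]
    refine sum_le_sum fun c _ => sum_le_sum fun c' _ => ?_
    by_cases huc : u c = 0
    · simp [huc]
    by_cases hvc : v c' = 0
    · simp [hvc]
    have := mul_le_mul_of_nonneg_left (hVK c c' huc hvc) (mul_nonneg (hu c) (hv c'))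
    linarith
  rcases (sum_nonneg fun c _ => hv c : 0 ≤ ∑ c, v c).eq_or_lt with hv0 | hvpos
  · have hv0' := (sum_eq_zero_iff_of_nonneg fun c _ => hv c).1 hv0.symm
    have hu0 := (sum_eq_zero_iff_of_nonneg fun c _ => hu c).1
      (le_antisymm (by simpa [← hv0] using huv) (sum_nonneg fun c _ => hu c))
    simp [hu0, hv0']
  · refine le_of_mul_le_mul_right ?_ hvpos
    nlinarith [mul_le_mul_of_nonneg_right huv (mul_nonneg hK hvV)]

def glue {ι α : Type*} [LinearOrder ι] (m : ι) (y z : ι → α) : ι → α :=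
  fun t => if t ≤ m then y t else z t

lemma glue_glue {ι α : Type*} [LinearOrder ι] (m : ι) (y z : ι → α) :
    glue m (glue m y z) (glue m z y) = y := by
  funext t
  by_cases h : t ≤ m <;> simp [glue, h]

def Separates {ι : Type*} [LinearOrder ι] (m : ι) (s s' : Set ι) : Prop :=
  s ⊆ Set.Iic m ∧ s' ⊆ Set.Ici m ∨ s ⊆ Set.Ici m ∧ s' ⊆ Set.Iic m

section MarkovChain

variable {k T : ℕ}

lemma jp_glue_mul_jp_glue (q : Fin k → ℝ) (P : Fin k → Fin k → ℝ) (m : Fin (T + 1))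
    {y z : Fin (T + 1) → Fin k} (h : y m = z m) :
    jp q P (glue m y z) * jp q P (glue m z y) = jp q P y * jp q P z := by
  unfold jp
  rw [mul_mul_mul_comm, mul_mul_mul_comm (q (y 0)), ← prod_mul_distrib, ← prod_mul_distrib]
  refine congrArg₂ (· * ·) (by simp [glue]) (prod_congr rfl fun t _ => ?_)
  by_cases h1 : t.succ ≤ m
  · simp [glue, h1, t.castSucc_le_succ.trans h1]
  by_cases h2 : t.castSucc ≤ m
  · have hm : t.castSucc = m :=
      h2.eq_or_lt.resolve_right fun h3 => h1 (Fin.castSucc_lt_iff_succ_le.1 h3)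
    simp only [glue, h1, h2, if_true, if_false]
    rw [hm, h]
    ring
  · simp only [glue, h1, h2, if_false]
    ring

variable {q : Fin k → ℝ} {P : Fin k → Fin k → ℝ}

lemma jp_nonneg (hq : ∀ s, 0 ≤ q s) (hP : ∀ s s', 0 ≤ P s s') (x : Fin (T + 1) → Fin k) :
    0 ≤ jp q P x :=
  mul_nonneg (hq _) (prod_nonneg fun _ _ => hP _ _)

lemma margNode_nonneg (hq : ∀ s, 0 ≤ q s) (hP : ∀ s s', 0 ≤ P s s') (i : Fin (T + 1))
    (a : Fin k) : 0 ≤ margNode q P i a :=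
  sum_nonneg fun x _ => jp_nonneg hq hP x

lemma condOut_nonneg (hq : ∀ s, 0 ≤ q s) (hP : ∀ s s', 0 ≤ P s s')
    {L : (Fin (T + 1) → Fin k) → ℝ} (hL : ∀ x, 0 ≤ L x) (i : Fin (T + 1)) (a : Fin k) :
    0 ≤ condOut q P L i a :=
  div_nonneg (sum_nonneg fun x _ => mul_nonneg (jp_nonneg hq hP x) (hL x))
    (margNode_nonneg hq hP i a)

lemma condTrans_nonneg (hq : ∀ s, 0 ≤ q s) (hP : ∀ s s', 0 ≤ P s s') (j i : Fin (T + 1))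
    (c a : Fin k) : 0 ≤ condTrans q P j i c a :=
  div_nonneg (sum_nonneg fun x _ => jp_nonneg hq hP x) (margNode_nonneg hq hP i a)

lemma jp_eq_zero_of_margNode_eq_zero (hq : ∀ s, 0 ≤ q s) (hP : ∀ s s', 0 ≤ P s s')
    {m : Fin (T + 1)} {c : Fin k} (h : margNode q P m c = 0) {x : Fin (T + 1) → Fin k}
    (hx : x m = c) : jp q P x = 0 :=
  (sum_eq_zero_iff_of_nonneg fun y _ => jp_nonneg hq hP y).1 h x (by simp [hx])

lemma margNode_pos_of_sum_ne_zero (hq : ∀ s, 0 ≤ q s) (hP : ∀ s s', 0 ≤ P s s')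
    {i m : Fin (T + 1)} {e c : Fin k} {f : (Fin (T + 1) → Fin k) → ℝ}
    (h : ∑ x : Fin (T + 1) → Fin k with x i = e ∧ x m = c, jp q P x * f x ≠ 0) :
    0 < margNode q P m c := by
  refine (margNode_nonneg hq hP m c).lt_of_ne' fun h0 => h (sum_eq_zero fun x hx => ?_)
  rw [jp_eq_zero_of_margNode_eq_zero hq hP h0 (mem_filter.1 hx).2.2, zero_mul]

lemma margNode_pos_of_condTrans_ne_zero (hq : ∀ s, 0 ≤ q s) (hP : ∀ s s', 0 ≤ P s s')
    {n n' : Fin (T + 1)} {d c : Fin k} (h : condTrans q P n' n d c ≠ 0) :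
    0 < margNode q P n' d := by
  refine (margNode_nonneg hq hP n' d).lt_of_ne' fun h0 => h ?_
  rw [condTrans, sum_eq_zero fun x hx =>
    jp_eq_zero_of_margNode_eq_zero hq hP h0 (mem_filter.1 hx).2.2, zero_div]

/-- Past and future of a Markov chain are conditionally independent given the present: the
gluing `(y, z) ↦ (glue m y z, glue m z y)` is an involution of the pairs of paths through
`c` at time `m` that preserves `jp y * jp z`. -/
theorem condIndep_past_future (m : Fin (T + 1)) {Φ Ψ : (Fin (T + 1) → Fin k) → ℝ}
    (hΦ : DependsOn Φ (Set.Iic m)) (hΨ : DependsOn Ψ (Set.Ici m)) (c : Fin k) :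
    (∑ x : Fin (T + 1) → Fin k with x m = c, jp q P x * (Φ x * Ψ x)) *
      (∑ x : Fin (T + 1) → Fin k with x m = c, jp q P x) =
    (∑ x : Fin (T + 1) → Fin k with x m = c, jp q P x * Φ x) *
      (∑ x : Fin (T + 1) → Fin k with x m = c, jp q P x * Ψ x) := by
  rw [sum_mul_sum, sum_mul_sum, ← sum_product', ← sum_product']
  set S := univ.filter fun x : Fin (T + 1) → Fin k => x m = c with hS
  have hmem : ∀ p ∈ S ×ˢ S, (glue m p.1 p.2, glue m p.2 p.1) ∈ S ×ˢ S := by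
    rintro ⟨y, z⟩ hp
    simp only [hS, mem_product, mem_filter, mem_univ, true_and] at hp ⊢
    simp [glue, hp.1, hp.2]
  have hinv : ∀ p : (Fin (T + 1) → Fin k) × (Fin (T + 1) → Fin k),
      (glue m (glue m p.1 p.2) (glue m p.2 p.1), glue m (glue m p.2 p.1) (glue m p.1 p.2)) = p :=
    fun p => Prod.ext (glue_glue m p.1 p.2) (glue_glue m p.2 p.1)
  refine sum_nbij' (fun p => (glue m p.1 p.2, glue m p.2 p.1))
    (fun p => (glue m p.1 p.2, glue m p.2 p.1)) hmem hmem (fun p _ => hinv p)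
    (fun p _ => hinv p) ?_
  rintro ⟨y, z⟩ hp
  simp only [hS, mem_product, mem_filter, mem_univ, true_and] at hp
  have hyz : y m = z m := hp.1.trans hp.2.symm
  have hΦy : Φ (glue m y z) = Φ y := hΦ fun t ht => by simp [glue, Set.mem_Iic.1 ht]
  have hΨy : Ψ (glue m z y) = Ψ y := hΨ fun t ht => by
    rcases (Set.mem_Ici.1 ht).eq_or_lt with rfl | hlt
    · simp [glue, hyz]
    · simp [glue, not_le.2 hlt]
  rw [hΦy, hΨy]
  linear_combination (-(Φ y * Ψ y)) * jp_glue_mul_jp_glue q P m hyz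

theorem condIndep_of_separates {m : Fin (T + 1)} {s s' : Set (Fin (T + 1))}
    (h : Separates m s s') {Φ Ψ : (Fin (T + 1) → Fin k) → ℝ} (hΦ : DependsOn Φ s)
    (hΨ : DependsOn Ψ s') (c : Fin k) :
    (∑ x : Fin (T + 1) → Fin k with x m = c, jp q P x * (Φ x * Ψ x)) *
      (∑ x : Fin (T + 1) → Fin k with x m = c, jp q P x) =
    (∑ x : Fin (T + 1) → Fin k with x m = c, jp q P x * Φ x) *
      (∑ x : Fin (T + 1) → Fin k with x m = c, jp q P x * Ψ x) := by
  rcases h with ⟨hs, hs'⟩ | ⟨hs, hs'⟩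
  · exact condIndep_past_future m (hΦ.mono hs) (hΨ.mono hs') c
  · simp_rw [mul_comm (Φ _) (Ψ _)]
    rw [mul_comm (∑ x ∈ _, jp q P x * Φ x)]
    exact condIndep_past_future m (hΨ.mono hs') (hΦ.mono hs) c

lemma sum_fiber_mul_eq_mul_condOut (hq : ∀ s, 0 ≤ q s) (hP : ∀ s s', 0 ≤ P s s')
    {m : Fin (T + 1)} {s s' : Set (Fin (T + 1))} (h : Separates m s s')
    {φ ψ : (Fin (T + 1) → Fin k) → ℝ} (hφ : DependsOn φ s) (hψ : DependsOn ψ s')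
    (c : Fin k) :
    ∑ x : Fin (T + 1) → Fin k with x m = c, jp q P x * (φ x * ψ x) =
      (∑ x : Fin (T + 1) → Fin k with x m = c, jp q P x * φ x) *
        condOut q P ψ m c := by
  by_cases hm : margNode q P m c = 0
  · rw [condOut, hm, div_zero, mul_zero]
    exact sum_eq_zero fun x hx => by
      rw [jp_eq_zero_of_margNode_eq_zero hq hP hm (mem_filter.1 hx).2, zero_mul]
  · rw [condOut, ← mul_div_assoc, eq_div_iff hm]
    exact condIndep_of_separates h hφ hψ c

lemma sum_fiber_split (i m : Fin (T + 1)) (e : Fin k) (F : (Fin (T + 1) → Fin k) → ℝ) :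
    ∑ x : Fin (T + 1) → Fin k with x i = e, F x =
      ∑ c : Fin k, ∑ x : Fin (T + 1) → Fin k with x i = e ∧ x m = c, F x := by
  rw [← sum_fiberwise (univ.filter fun x : Fin (T + 1) → Fin k => x i = e) (fun x => x m) F]
  simp only [filter_filter]

lemma sum_filter_and_eq_sum_ite (i m : Fin (T + 1)) (e c : Fin k)
    (F : (Fin (T + 1) → Fin k) → ℝ) :
    ∑ x : Fin (T + 1) → Fin k with x i = e ∧ x m = c, F x =
      ∑ x : Fin (T + 1) → Fin k with x m = c, if x i = e then F x else 0 := by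
  rw [← sum_filter, filter_filter]
  simp only [and_comm]

lemma condOut_eq_sum (m : Fin (T + 1)) (φ : (Fin (T + 1) → Fin k) → ℝ) (i : Fin (T + 1))
    (e : Fin k) :
    condOut q P φ i e = ∑ c : Fin k,
      (∑ x : Fin (T + 1) → Fin k with x i = e ∧ x m = c, jp q P x * φ x) /
        margNode q P i e := by
  rw [condOut, sum_fiber_split i m, sum_div]

/-- Law of total probability through the node `m`, where the Markov property turns the
conditional law of `ψ` given `X_i = e, X_m = c` into its law given `X_m = c` alone. -/
lemma condOut_mul_eq_sum (hq : ∀ s, 0 ≤ q s) (hP : ∀ s s', 0 ≤ P s s') {i m : Fin (T + 1)}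
    {s s' : Set (Fin (T + 1))} (h : Separates m s s') (hi : i ∈ s)
    {φ ψ : (Fin (T + 1) → Fin k) → ℝ} (hφ : DependsOn φ s) (hψ : DependsOn ψ s')
    (e : Fin k) :
    condOut q P (fun x => φ x * ψ x) i e = ∑ c : Fin k,
      (∑ x : Fin (T + 1) → Fin k with x i = e ∧ x m = c, jp q P x * φ x) /
        margNode q P i e * condOut q P ψ m c := by
  have hφe : DependsOn (fun x => if x i = e then φ x else 0) s := fun x y hxy => by
    simp only [hxy i hi, hφ hxy]
  rw [condOut, sum_fiber_split i m, sum_div]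
  refine sum_congr rfl fun c _ => ?_
  have hsplit := sum_fiber_mul_eq_mul_condOut hq hP h hφe hψ c
  simp only [ite_mul, zero_mul, mul_ite, mul_zero] at hsplit
  rw [div_mul_eq_mul_div, sum_filter_and_eq_sum_ite, sum_filter_and_eq_sum_ite, hsplit]

lemma condOut_eq_sum_condTrans_mul (hq : ∀ s, 0 ≤ q s) (hP : ∀ s s', 0 ≤ P s s')
    {n n' : Fin (T + 1)} {s' : Set (Fin (T + 1))} (h : Separates n' {n} s')
    {ψ : (Fin (T + 1) → Fin k) → ℝ} (hψ : DependsOn ψ s') (c : Fin k) :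
    condOut q P ψ n c = ∑ d : Fin k, condTrans q P n' n d c * condOut q P ψ n' d := by
  simpa only [one_mul, mul_one, condTrans] using condOut_mul_eq_sum hq hP h rfl
    ((dependsOn_const (1 : ℝ)).mono (Set.empty_subset _)) hψ c

lemma sum_condTrans_eq_one (n n' : Fin (T + 1)) {c : Fin k} (hc : margNode q P n c ≠ 0) :
    ∑ d : Fin k, condTrans q P n' n d c = 1 := by
  rw [← div_self hc]
  simp only [condTrans, ← sum_div]
  rw [margNode, sum_fiber_split n n' c]

lemma condOut_le_mul_of_private (hq : ∀ s, 0 ≤ q s) (hP : ∀ s s', 0 ≤ P s s')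
    {n n' : Fin (T + 1)} {s' : Set (Fin (T + 1))} (h : Separates n' {n} s')
    {ψ : (Fin (T + 1) → Fin k) → ℝ} (hψ : DependsOn ψ s') (hψ0 : ∀ x, 0 ≤ ψ x)
    {K : ℝ} (hK : 0 ≤ K) (hpriv : ∀ d d', 0 < margNode q P n' d → 0 < margNode q P n' d' →
      condOut q P ψ n' d ≤ K * condOut q P ψ n' d')
    {c c' : Fin k} (hc : margNode q P n c ≠ 0) (hc' : margNode q P n c' ≠ 0) :
    condOut q P ψ n c ≤ K * condOut q P ψ n c' := by
  rw [condOut_eq_sum_condTrans_mul hq hP h hψ c, condOut_eq_sum_condTrans_mul hq hP h hψ c']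
  simpa only [one_mul] using sum_mul_le_mul_mul_sum_mul (ρ := 1)
    (fun d => condTrans_nonneg hq hP n' n d c) (fun d => condTrans_nonneg hq hP n' n d c')
    (fun d => condOut_nonneg hq hP hψ0 n' d) hK
    (fun d d' hd hd' => hpriv d d' (margNode_pos_of_condTrans_ne_zero hq hP hd)
      (margNode_pos_of_condTrans_ne_zero hq hP hd'))
    (by rw [sum_condTrans_eq_one n n' hc, sum_condTrans_eq_one n n' hc', one_mul])

lemma condOut_le_mul_of_condTrans_le (hq : ∀ s, 0 ≤ q s) (hP : ∀ s s', 0 ≤ P s s')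
    {n n' : Fin (T + 1)} {s' : Set (Fin (T + 1))} (h : Separates n' {n} s')
    {ψ : (Fin (T + 1) → Fin k) → ℝ} (hψ : DependsOn ψ s') (hψ0 : ∀ x, 0 ≤ ψ x)
    {K : ℝ} {c c' : Fin k}
    (hinf : ∀ d, condTrans q P n' n d c ≤ K * condTrans q P n' n d c') :
    condOut q P ψ n c ≤ K * condOut q P ψ n c' := by
  rw [condOut_eq_sum_condTrans_mul hq hP h hψ c, condOut_eq_sum_condTrans_mul hq hP h hψ c',
    mul_sum]
  exact sum_le_sum fun d _ => by
    rw [← mul_assoc]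
    exact mul_le_mul_of_nonneg_right (hinf d) (condOut_nonneg hq hP hψ0 n' d)

lemma condOut_le_min_mul (hq : ∀ s, 0 ≤ q s) (hP : ∀ s s', 0 ≤ P s s')
    {n n' : Fin (T + 1)} {s' : Set (Fin (T + 1))} (h : Separates n' {n} s')
    {ψ : (Fin (T + 1) → Fin k) → ℝ} (hψ : DependsOn ψ s') (hψ0 : ∀ x, 0 ≤ ψ x)
    {ε e : ℝ}
    (hpriv : ∀ d d', 0 < margNode q P n' d → 0 < margNode q P n' d' →
      condOut q P ψ n' d ≤ Real.exp ε * condOut q P ψ n' d')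
    {c c' : Fin k} (hinf : ∀ d, condTrans q P n' n d c ≤ Real.exp e * condTrans q P n' n d c')
    (hc : 0 < margNode q P n c) (hc' : 0 < margNode q P n c') :
    condOut q P ψ n c ≤ min (Real.exp ε) (Real.exp e) * condOut q P ψ n c' := by
  rw [min_mul_of_nonneg _ _ (condOut_nonneg hq hP hψ0 n c')]
  exact le_min
    (condOut_le_mul_of_private hq hP h hψ hψ0 (Real.exp_pos ε).le hpriv hc.ne' hc'.ne')
    (condOut_le_mul_of_condTrans_le hq hP h hψ hψ0 hinf)

lemma condOut_mul_le (hq : ∀ s, 0 ≤ q s) (hP : ∀ s s', 0 ≤ P s s') {i m : Fin (T + 1)}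
    {s s' : Set (Fin (T + 1))} (h : Separates m s s') (hi : i ∈ s)
    {φ ψ : (Fin (T + 1) → Fin k) → ℝ} (hφ : DependsOn φ s) (hψ : DependsOn ψ s')
    (hφ0 : ∀ x, 0 ≤ φ x) (hψ0 : ∀ x, 0 ≤ ψ x) {ρ K : ℝ} (hK : 0 ≤ K) {a b : Fin k}
    (hφab : condOut q P φ i a ≤ ρ * condOut q P φ i b)
    (hψK : ∀ c c', 0 < margNode q P m c → 0 < margNode q P m c' →
      condOut q P ψ m c ≤ K * condOut q P ψ m c') :
    condOut q P (fun x => φ x * ψ x) i a ≤ ρ * K * condOut q P (fun x => φ x * ψ x) i b := by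
  rw [condOut_eq_sum m φ i a, condOut_eq_sum m φ i b] at hφab
  rw [condOut_mul_eq_sum hq hP h hi hφ hψ a, condOut_mul_eq_sum hq hP h hi hφ hψ b]
  have hweight : ∀ e c, 0 ≤
      (∑ x : Fin (T + 1) → Fin k with x i = e ∧ x m = c, jp q P x * φ x) /
        margNode q P i e := fun e c =>
    div_nonneg (sum_nonneg fun x _ => mul_nonneg (jp_nonneg hq hP x) (hφ0 x))
      (margNode_nonneg hq hP i e)
  refine sum_mul_le_mul_mul_sum_mul (hweight a) (hweight b)
    (fun c => condOut_nonneg hq hP hψ0 m c) hK (fun c c' hc hc' => hψK c c' ?_ ?_) hφab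
  · exact margNode_pos_of_sum_ne_zero hq hP fun h0 => hc (by rw [h0, zero_div])
  · exact margNode_pos_of_sum_ne_zero hq hP fun h0 => hc' (by rw [h0, zero_div])

end MarkovChain

/-- **Parallel composition for Pufferfish on Markov chains (general mechanisms)**:
if `M_A` acting on the subchain `X_{T1..T2}` is `ε_A`-Pufferfish private for secrets
about nodes in `[T1,T2]`, `M_B` acting on `X_{T3..T4}` is `ε_B`-Pufferfish private for
secrets about nodes in `[T3,T4]`, and the max-influences between the boundary nodes
`X_{T2}, X_{T3}` are bounded by `eInf32` (of `X_{T2}` on `X_{T3}`) resp. `eInf23`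
(of `X_{T3}` on `X_{T2}`) over all `θ ∈ Θ`, then the joint likelihood ratio for a
secret pair at a node `i ∈ [T1,T2]` is at most `min {exp (ε_A+ε_B), exp (ε_A+eInf32)}`,
and symmetrically at most `min {exp (ε_A+ε_B), exp (ε_B+eInf23)}` for `i ∈ [T3,T4]`. -/
theorem pufferfish_parallel_composition_general {k T : ℕ} {OutA OutB : Type*}
    (Θ : Set ((Fin k → ℝ) × (Fin k → Fin k → ℝ)))
    (hΘ : ∀ θ ∈ Θ, (∀ s, 0 ≤ θ.1 s) ∧ (∑ s, θ.1 s = 1) ∧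
      (∀ s s', 0 ≤ θ.2 s s') ∧ (∀ s, ∑ s', θ.2 s s' = 1))
    (T1 T2 T3 T4 : Fin (T + 1)) (h12 : T1 < T2) (h23 : T2 < T3) (h34 : T3 < T4)
    (LA : OutA → (Fin (T + 1) → Fin k) → ℝ) (LB : OutB → (Fin (T + 1) → Fin k) → ℝ)
    (hLA0 : ∀ w x, 0 ≤ LA w x) (hLB0 : ∀ w x, 0 ≤ LB w x)
    -- `M_A` depends only on the subchain `X^A = (X_{T1}, …, X_{T2})`:
    (hLAdep : ∀ (w : OutA) (x y : Fin (T + 1) → Fin k),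
      (∀ t, T1 ≤ t → t ≤ T2 → x t = y t) → LA w x = LA w y)
    -- `M_B` depends only on the subchain `X^B = (X_{T3}, …, X_{T4})`:
    (hLBdep : ∀ (w : OutB) (x y : Fin (T + 1) → Fin k),
      (∀ t, T3 ≤ t → t ≤ T4 → x t = y t) → LB w x = LB w y)
    (εA εB eInf32 eInf23 : ℝ)
    -- `M_A(X^A)` is `ε_A`-Pufferfish private for secrets about nodes in `[T1, T2]`:
    (hA : ∀ θ ∈ Θ, ∀ i, T1 ≤ i → i ≤ T2 → ∀ (a b : Fin k) (w : OutA),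
      0 < margNode θ.1 θ.2 i a → 0 < margNode θ.1 θ.2 i b →
      condOut θ.1 θ.2 (LA w) i a ≤ Real.exp εA * condOut θ.1 θ.2 (LA w) i b)
    -- `M_B(X^B)` is `ε_B`-Pufferfish private for secrets about nodes in `[T3, T4]`:
    (hB : ∀ θ ∈ Θ, ∀ i, T3 ≤ i → i ≤ T4 → ∀ (a b : Fin k) (w : OutB),
      0 < margNode θ.1 θ.2 i a → 0 < margNode θ.1 θ.2 i b →
      condOut θ.1 θ.2 (LB w) i a ≤ Real.exp εB * condOut θ.1 θ.2 (LB w) i b)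
    -- `e_Θ(X_{T3} | X_{T2}) ≤ eInf32`:
    (hInf32 : ∀ θ ∈ Θ, ∀ (a b c : Fin k),
      0 < margNode θ.1 θ.2 T2 a → 0 < margNode θ.1 θ.2 T2 b →
      condTrans θ.1 θ.2 T3 T2 c a ≤ Real.exp eInf32 * condTrans θ.1 θ.2 T3 T2 c b)
    -- `e_Θ(X_{T2} | X_{T3}) ≤ eInf23`:
    (hInf23 : ∀ θ ∈ Θ, ∀ (a b c : Fin k),
      0 < margNode θ.1 θ.2 T3 a → 0 < margNode θ.1 θ.2 T3 b →
      condTrans θ.1 θ.2 T2 T3 c a ≤ Real.exp eInf23 * condTrans θ.1 θ.2 T2 T3 c b) :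
    ∀ θ ∈ Θ, ∀ (wA : OutA) (wB : OutB) (a b : Fin k),
      (∀ i, T1 ≤ i → i ≤ T2 →
        0 < margNode θ.1 θ.2 i a → 0 < margNode θ.1 θ.2 i b →
        condOut θ.1 θ.2 (fun x => LA wA x * LB wB x) i a ≤
          min (Real.exp (εA + εB)) (Real.exp (εA + eInf32)) *
            condOut θ.1 θ.2 (fun x => LA wA x * LB wB x) i b) ∧
      (∀ i, T3 ≤ i → i ≤ T4 →
        0 < margNode θ.1 θ.2 i a → 0 < margNode θ.1 θ.2 i b →
        condOut θ.1 θ.2 (fun x => LA wA x * LB wB x) i a ≤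
          min (Real.exp (εA + εB)) (Real.exp (εB + eInf23)) *
            condOut θ.1 θ.2 (fun x => LA wA x * LB wB x) i b) := by
  intro θ hθ wA wB a b
  obtain ⟨hq, -, hP, -⟩ := hΘ θ hθ
  have hA_dep : DependsOn (LA wA) (Set.Icc T1 T2) := fun x y hxy =>
    hLAdep wA x y fun t h1 h2 => hxy t ⟨h1, h2⟩
  have hB_dep : DependsOn (LB wB) (Set.Icc T3 T4) := fun x y hxy =>
    hLBdep wB x y fun t h1 h2 => hxy t ⟨h1, h2⟩
  have hsepA : Separates T2 (Set.Icc T1 T2) (Set.Icc T3 T4) :=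
    Or.inl ⟨fun t ht => ht.2, fun t ht => h23.le.trans ht.1⟩
  have hsepB : Separates T3 (Set.Icc T3 T4) (Set.Icc T1 T2) :=
    Or.inr ⟨fun t ht => ht.1, fun t ht => ht.2.trans h23.le⟩
  constructor
  · intro i hi1 hi2 ha hb
    rw [Real.exp_add, Real.exp_add, ← mul_min_of_nonneg _ _ (Real.exp_pos εA).le]
    refine condOut_mul_le hq hP hsepA ⟨hi1, hi2⟩ hA_dep hB_dep (hLA0 wA) (hLB0 wB)
      (by positivity) (hA θ hθ i hi1 hi2 a b wA ha hb) fun c c' hc hc' => ?_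
    exact condOut_le_min_mul hq hP
      (Or.inl ⟨Set.singleton_subset_iff.2 h23.le, fun t ht => ht.1⟩)
      hB_dep (hLB0 wB) (fun d d' => hB θ hθ T3 le_rfl h34.le d d' wB)
      (fun d => hInf32 θ hθ c c' d hc hc') hc hc'
  · intro i hi3 hi4 ha hb
    rw [add_comm εA, Real.exp_add, Real.exp_add, ← mul_min_of_nonneg _ _ (Real.exp_pos εB).le]
    simp_rw [mul_comm (LA wA _)]
    refine condOut_mul_le hq hP hsepB ⟨hi3, hi4⟩ hB_dep hA_dep (hLB0 wB) (hLA0 wA)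
      (by positivity) (hB θ hθ i hi3 hi4 a b wB ha hb) fun c c' hc hc' => ?_
    exact condOut_le_min_mul hq hP
      (Or.inr ⟨Set.singleton_subset_iff.2 h23.le, fun t ht => ht.2⟩)
      hA_dep (hLA0 wA) (fun d d' => hA θ hθ T2 h12.le le_rfl d d' wA)
      (fun d => hInf23 θ hθ c c' d hc hc') hc hc'
end

section
/- Pufferfish guarantee of the Markov Quilt Mechanism components (joint with remote nodes): Let $X$ be a finite family of discrete random variables with distribution $\theta$, $F$ a 1-Lipschitz query (changing any single variable's value changes $F$ by at most 1), and $X_i$ a node with Markov Quilt $X_Q$, nearby set $X_N \ni X_i$, remote set $X_R$. Suppose $\sigma_{\max} \ge |X_N| / (\epsilon - e_\theta(X_Q \mid X_i))$ where $e_\theta(X_Q \mid X_i) < \epsilon$ is the max-influence of $X_i$ on $X_Q$, and let $Z \sim \mathrm{Lap}(1)$. Then for all outputs $w$, all realizations $x_{R \cup Q}$ of $X_{R \cup Q} = X_R \cup X_Q$, and all values $a, b$: $\frac{P(F(X) + \sigma_{\max} Z = w, X_{R\cup Q} = x_{R\cup Q} \mid X_i = a, \theta)}{P(F(X) + \sigma_{\max}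 Z = w, X_{R\cup Q} = x_{R\cup Q} \mid X_i = b, \theta)} \le e^{\epsilon}$. -/
/-!
Fix `x₀` and let `A` (resp. `B`) be the configurations agreeing with `x₀` on `Q ∪ R` and taking
the value `a` (resp. `b`) at `i`. Any `x ∈ A` and `y ∈ B` differ only inside `N`, so
`|F x - F y| ≤ |N|` and the two Laplace densities at `w - F x`, `w - F y` are within a factor
`exp (|N| / σmax) ≤ exp (ε - eQ)`; this bounds the ratio of the densities of the output
conditioned on `X_{Q ∪ R}`. The remaining factor `P(A) / P(X_i = a)` over
`P(B) / P(X_i = b)` equals the corresponding ratio for `Q` alone by conditional independence,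
hence is at most `exp eQ`.
-/

open Finset

noncomputable def lapDen (σ z : ℝ) : ℝ := 1 / (2 * σ) * Real.exp (-|z| / σ)

noncomputable def margI {V : Type*} [Fintype V] [DecidableEq V] {k : ℕ}
    (θ : (V → Fin k) → ℝ) (i : V) (a : Fin k) : ℝ :=
  ∑ y ∈ univ.filter (fun y : V → Fin k => y i = a), θ y

lemma lapDen_nonneg {σ : ℝ} (hσ : 0 < σ) (z : ℝ) : 0 ≤ lapDen σ z := by
  unfold lapDen; positivity

lemma lapDen_le_exp_mul_lapDen {σ c z₁ z₂ : ℝ} (hσ : 0 < σ) (h : |z₁ - z₂| ≤ c) :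
    lapDen σ z₁ ≤ Real.exp (c / σ) * lapDen σ z₂ := by
  unfold lapDen
  rw [mul_left_comm, ← Real.exp_add]
  gcongr
  rw [← add_div]
  gcongr
  linarith [abs_sub_abs_le_abs_sub z₂ z₁, abs_sub_comm z₁ z₂]

lemma sum_mul_sum_le_of_le_mul {ι R : Type*} [CommSemiring R] [PartialOrder R]
    [IsOrderedRing R] {s t : Finset ι} {p f : ι → R} {c : R} (hp : ∀ x, 0 ≤ p x)
    (h : ∀ x ∈ s, ∀ y ∈ t, f x ≤ c * f y) :
    (∑ x ∈ s, p x * f x) * ∑ y ∈ t, p y ≤ c * ((∑ x ∈ s, p x) * ∑ y ∈ t, p y * f y) := by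
  rw [sum_mul_sum, sum_mul_sum, mul_sum]
  refine sum_le_sum fun x hx => ?_
  rw [mul_sum]
  refine sum_le_sum fun y hy => ?_
  calc p x * f x * p y ≤ p x * (c * f y) * p y :=
      mul_le_mul_of_nonneg_right (mul_le_mul_of_nonneg_left (h x hx y hy) (hp x)) (hp y)
    _ = c * (p x * (p y * f y)) := by ring

lemma sum_mul_eq_zero_of_sum_eq_zero {ι R : Type*} [Semiring R] [PartialOrder R]
    [IsOrderedAddMonoid R] {s : Finset ι} {p : ι → R} (f : ι → R)
    (hp : ∀ x, 0 ≤ p x) (h : ∑ x ∈ s, p x = 0) : ∑ x ∈ s, p x * f x = 0 :=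
  sum_eq_zero fun x hx => by rw [(sum_eq_zero_iff_of_nonneg fun x _ => hp x).1 h x hx, zero_mul]

lemma filter_ne_subset_of_eqOn {V α : Type*} [Fintype V] [DecidableEq V] [DecidableEq α]
    {S N : Finset V} {x y : V → α} (hxy : ∀ v ∈ S, x v = y v) (hcover : S ∪ N = univ) :
    univ.filter (fun v => x v ≠ y v) ⊆ N := fun v hv =>
  (mem_union.1 (hcover ▸ mem_univ v)).resolve_left fun hvS => (mem_filter.1 hv).2 (hxy v hvS)

/-- `Sa / Ma = (Sa / PA) * (PA / Ma)`: `c₁` bounds the ratio of the conditional densities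
`Sa / PA`, `Sb / PB` and `c₂` the ratio of the masses. -/
lemma div_le_mul_mul_div_of_factors {Sa Sb PA PB Ma Mb c₁ c₂ : ℝ} (hSb : 0 ≤ Sb)
    (hPA : 0 ≤ PA) (hPB : 0 ≤ PB) (hc₁ : 0 ≤ c₁) (hc₂ : 0 ≤ c₂) (hMa : 0 < Ma) (hMb : 0 < Mb)
    (hS : Sa * PB ≤ c₁ * (PA * Sb)) (hP : PA / Ma ≤ c₂ * (PB / Mb))
    (hzero : PA = 0 → Sa = 0) : Sa / Ma ≤ c₁ * c₂ * (Sb / Mb) := by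
  rw [← mul_div_assoc, div_le_div_iff₀ hMa hMb] at hP ⊢
  rcases hPB.eq_or_lt with hPB0 | hPBpos
  · subst hPB0
    have hPA0 : PA = 0 := le_antisymm (by nlinarith) hPA
    rw [hzero hPA0, zero_mul]
    positivity
  · refine le_of_mul_le_mul_right ?_ hPBpos
    calc Sa * Mb * PB = Sa * PB * Mb := by ring
      _ ≤ c₁ * (PA * Sb) * Mb := by gcongr
      _ = c₁ * Sb * (PA * Mb) := by ring
      _ ≤ c₁ * Sb * (c₂ * PB * Ma) := by gcongr
      _ = c₁ * c₂ * Sb * Ma * PB := by ring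

section MarkovQuilt

variable {V : Type*} [Fintype V] [DecidableEq V] {k : ℕ}

def agreeSet (S : Finset V) (x₀ : V → Fin k) (i : V) (a : Fin k) : Finset (V → Fin k) :=
  univ.filter fun x => (∀ v ∈ S, x v = x₀ v) ∧ x i = a

lemma agreeSet_anti {S T : Finset V} (hST : S ⊆ T) (x₀ : V → Fin k) (i : V) (a : Fin k) :
    agreeSet T x₀ i a ⊆ agreeSet S x₀ i a :=
  monotone_filter_right _ fun _ _ hx => ⟨fun v hv => hx.1 v (hST hv), hx.2⟩

lemma eq_of_mem_agreeSet {S : Finset V} {x₀ x y : V → Fin k} {i : V} {a b : Fin k}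
    (hx : x ∈ agreeSet S x₀ i a) (hy : y ∈ agreeSet S x₀ i b) : ∀ v ∈ S, x v = y v :=
  fun v hv => ((mem_filter.1 hx).2.1 v hv).trans ((mem_filter.1 hy).2.1 v hv).symm

/-- Conditional independence of `X_R` and `X_i` given `X_Q` transfers an influence bound from
`X_Q` to `X_{Q ∪ R}`. -/
lemma agreeSet_union_ratio_le (θ : (V → Fin k) → ℝ) (hθ : ∀ x, 0 ≤ θ x) {Q R : Finset V}
    {x₀ : V → Fin k} {i : V} {a b : Fin k} {Ma Mb c : ℝ} (hMa : 0 < Ma) (hMb : 0 < Mb)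
    (hc : 0 ≤ c)
    (hCI : (∑ x ∈ agreeSet (Q ∪ R) x₀ i a, θ x) * (∑ x ∈ agreeSet Q x₀ i b, θ x) =
      (∑ x ∈ agreeSet (Q ∪ R) x₀ i b, θ x) * (∑ x ∈ agreeSet Q x₀ i a, θ x))
    (hInf : (∑ x ∈ agreeSet Q x₀ i a, θ x) / Ma ≤ c * ((∑ x ∈ agreeSet Q x₀ i b, θ x) / Mb)) :
    (∑ x ∈ agreeSet (Q ∪ R) x₀ i a, θ x) / Ma ≤
      c * ((∑ x ∈ agreeSet (Q ∪ R) x₀ i b, θ x) / Mb) := by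
  set PA := ∑ x ∈ agreeSet (Q ∪ R) x₀ i a, θ x
  set PB := ∑ x ∈ agreeSet (Q ∪ R) x₀ i b, θ x
  set TA := ∑ x ∈ agreeSet Q x₀ i a, θ x
  set TB := ∑ x ∈ agreeSet Q x₀ i b, θ x
  have hPA : 0 ≤ PA := sum_nonneg fun x _ => hθ x
  have hPB : 0 ≤ PB := sum_nonneg fun x _ => hθ x
  have hPATA : PA ≤ TA :=
    sum_le_sum_of_subset_of_nonneg (agreeSet_anti subset_union_left x₀ i a) fun x _ _ => hθ x
  rw [← mul_div_assoc, div_le_div_iff₀ hMa hMb] at hInf ⊢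
  have hTB : 0 ≤ TB := sum_nonneg fun x _ => hθ x
  rcases hTB.eq_or_lt with hTB0 | hTBpos
  · rw [← hTB0, mul_zero, zero_mul] at hInf
    have hPA0 : PA = 0 := le_antisymm (by nlinarith) hPA
    rw [hPA0, zero_mul]
    positivity
  · refine le_of_mul_le_mul_right ?_ hTBpos
    calc PA * Mb * TB = PB * (TA * Mb) := by rw [mul_right_comm, hCI]; ring
      _ ≤ PB * (c * TB * Ma) := by gcongr
      _ = c * PB * Ma * TB := by ring

end MarkovQuilt

theorem mqm_joint_ratio_bound_general {V : Type*} [Fintype V] [DecidableEq V] {k : ℕ}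
    (θ : (V → Fin k) → ℝ) (hθ0 : ∀ x, 0 ≤ θ x)
    (F : (V → Fin k) → ℝ)
    -- `F` is 1-Lipschitz: changing any set of variables changes `F` by at most its size
    (hF : ∀ x y : V → Fin k, |F x - F y| ≤ (univ.filter fun v => x v ≠ y v).card)
    (i : V) (Q N R : Finset V)
    (hcover : Q ∪ N ∪ R = univ)
    -- `X_R` is conditionally independent of `X_i` given `X_Q` (cross-multiplied form):
    (hCI : ∀ (x0 : V → Fin k) (a b : Fin k),
      (∑ x ∈ univ.filter (fun x : V → Fin k =>
          (∀ v ∈ Q ∪ R, x v = x0 v) ∧ x i = a), θ x) *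
      (∑ x ∈ univ.filter (fun x : V → Fin k =>
          (∀ v ∈ Q, x v = x0 v) ∧ x i = b), θ x) =
      (∑ x ∈ univ.filter (fun x : V → Fin k =>
          (∀ v ∈ Q ∪ R, x v = x0 v) ∧ x i = b), θ x) *
      (∑ x ∈ univ.filter (fun x : V → Fin k =>
          (∀ v ∈ Q, x v = x0 v) ∧ x i = a), θ x))
    (ε eQ σmax : ℝ) (heQ : eQ < ε) (hσpos : 0 < σmax)
    -- max-influence of `X_i` on `X_Q` is at most `eQ`:
    (hInf : ∀ (x0 : V → Fin k) (a b : Fin k),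
      0 < margI θ i a → 0 < margI θ i b →
      (∑ x ∈ univ.filter (fun x : V → Fin k =>
          (∀ v ∈ Q, x v = x0 v) ∧ x i = a), θ x) / margI θ i a ≤
      Real.exp eQ *
        ((∑ x ∈ univ.filter (fun x : V → Fin k =>
            (∀ v ∈ Q, x v = x0 v) ∧ x i = b), θ x) / margI θ i b))
    (hσ : σmax ≥ (N.card : ℝ) / (ε - eQ)) :
    ∀ (w : ℝ) (x0 : V → Fin k) (a b : Fin k),
      0 < margI θ i a → 0 < margI θ i b →
      (∑ x ∈ univ.filter (fun x : V → Fin k =>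
          (∀ v ∈ Q ∪ R, x v = x0 v) ∧ x i = a),
        θ x * lapDen σmax (w - F x)) / margI θ i a ≤
      Real.exp ε *
        ((∑ x ∈ univ.filter (fun x : V → Fin k =>
            (∀ v ∈ Q ∪ R, x v = x0 v) ∧ x i = b),
          θ x * lapDen σmax (w - F x)) / margI θ i b) := by
  intro w x0 a b ha hb
  have hscale : (N.card : ℝ) / σmax ≤ ε - eQ := by
    rw [ge_iff_le, div_le_iff₀ (sub_pos.2 heQ)] at hσ
    rw [div_le_iff₀ hσpos]
    linarith
  have hcover' : Q ∪ R ∪ N = univ := by rw [← hcover, union_right_comm]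
  have hlap : ∀ x ∈ agreeSet (Q ∪ R) x0 i a, ∀ y ∈ agreeSet (Q ∪ R) x0 i b,
      lapDen σmax (w - F x) ≤ Real.exp (ε - eQ) * lapDen σmax (w - F y) := by
    intro x hx y hy
    have hdiff : |(w - F x) - (w - F y)| ≤ N.card := by
      rw [sub_sub_sub_cancel_left, abs_sub_comm]
      exact (hF x y).trans
        (mod_cast card_le_card (filter_ne_subset_of_eqOn (eq_of_mem_agreeSet hx hy) hcover'))
    exact (lapDen_le_exp_mul_lapDen hσpos hdiff).trans
      (by gcongr; exact lapDen_nonneg hσpos _)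
  have h := div_le_mul_mul_div_of_factors
    (sum_nonneg fun x _ => mul_nonneg (hθ0 x) (lapDen_nonneg hσpos _))
    (sum_nonneg fun x _ => hθ0 x) (sum_nonneg fun x _ => hθ0 x) (Real.exp_nonneg _)
    (Real.exp_nonneg _) ha hb (sum_mul_sum_le_of_le_mul hθ0 hlap)
    (agreeSet_union_ratio_le θ hθ0 ha hb (Real.exp_nonneg _) (hCI x0 a b) (hInf x0 a b ha hb))
    (sum_mul_eq_zero_of_sum_eq_zero _ hθ0)
  rwa [← Real.exp_add, sub_add_cancel] at h

/-- **Pufferfish guarantee of the Markov Quilt Mechanism components (joint with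
remote nodes)**: for a 1-Lipschitz query `F`, a node `i` with Markov Quilt `Q`,
nearby set `N ∋ i` and remote set `R` (with `X_R ⊥ X_i | X_Q`), max-influence of
`X_i` on `X_Q` at most `eQ < ε`, and Laplace noise scale
`σmax ≥ |N| / (ε - eQ)`, the joint likelihood ratio
`P(F(X)+σmax·Z = w, X_{R∪Q} = x_{R∪Q} | X_i = a) /
 P(F(X)+σmax·Z = w, X_{R∪Q} = x_{R∪Q} | X_i = b)` is at most `e^ε`. -/
theorem mqm_joint_ratio_bound {V : Type*} [Fintype V] [DecidableEq V] {k : ℕ}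
    (θ : (V → Fin k) → ℝ) (hθ0 : ∀ x, 0 ≤ θ x) (hθ1 : ∑ x, θ x = 1)
    (F : (V → Fin k) → ℝ)
    -- `F` is 1-Lipschitz: changing any set of variables changes `F` by at most its size
    (hF : ∀ x y : V → Fin k, |F x - F y| ≤ (univ.filter fun v => x v ≠ y v).card)
    (i : V) (Q N R : Finset V)
    (hiN : i ∈ N) (hQN : Disjoint Q N) (hQR : Disjoint Q R) (hNR : Disjoint N R)
    (hcover : Q ∪ N ∪ R = univ)
    -- `X_R` is conditionally independent of `X_i` given `X_Q` (cross-multiplied form):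
    (hCI : ∀ (x0 : V → Fin k) (a b : Fin k),
      (∑ x ∈ univ.filter (fun x : V → Fin k =>
          (∀ v ∈ Q ∪ R, x v = x0 v) ∧ x i = a), θ x) *
      (∑ x ∈ univ.filter (fun x : V → Fin k =>
          (∀ v ∈ Q, x v = x0 v) ∧ x i = b), θ x) =
      (∑ x ∈ univ.filter (fun x : V → Fin k =>
          (∀ v ∈ Q ∪ R, x v = x0 v) ∧ x i = b), θ x) *
      (∑ x ∈ univ.filter (fun x : V → Fin k =>
          (∀ v ∈ Q, x v = x0 v) ∧ x i = a), θ x))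
    (ε eQ σmax : ℝ) (heQ0 : 0 ≤ eQ) (heQ : eQ < ε) (hσpos : 0 < σmax)
    -- max-influence of `X_i` on `X_Q` is at most `eQ`:
    (hInf : ∀ (x0 : V → Fin k) (a b : Fin k),
      0 < margI θ i a → 0 < margI θ i b →
      (∑ x ∈ univ.filter (fun x : V → Fin k =>
          (∀ v ∈ Q, x v = x0 v) ∧ x i = a), θ x) / margI θ i a ≤
      Real.exp eQ *
        ((∑ x ∈ univ.filter (fun x : V → Fin k =>
            (∀ v ∈ Q, x v = x0 v) ∧ x i = b), θ x) / margI θ i b))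
    (hσ : σmax ≥ (N.card : ℝ) / (ε - eQ)) :
    ∀ (w : ℝ) (x0 : V → Fin k) (a b : Fin k),
      0 < margI θ i a → 0 < margI θ i b →
      (∑ x ∈ univ.filter (fun x : V → Fin k =>
          (∀ v ∈ Q ∪ R, x v = x0 v) ∧ x i = a),
        θ x * lapDen σmax (w - F x)) / margI θ i a ≤
      Real.exp ε *
        ((∑ x ∈ univ.filter (fun x : V → Fin k =>
            (∀ v ∈ Q ∪ R, x v = x0 v) ∧ x i = b),
          θ x * lapDen σmax (w - F x)) / margI θ i b) :=
  mqm_joint_ratio_bound_general θ hθ0 F hF i Q N R hcover hCI ε eQ σmax heQ hσpos hInf hσ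
end

section
/- Subadditivity of max-influence over combined quilts (two-sided chain version): Let $X_1 \to \cdots \to X_T$ be a Markov chain with finite state space, fix node $X_i$, and let $a^1, a^2 \ge 1$ and $b^1, b^2 \ge 1$ be offsets with $i - a^j \ge 1$ and $i + b^j \le T$. Then $e_\theta(\{X_{i-a^1}, X_{i+b^1}\} \mid X_i) + e_\theta(\{X_{i-a^2}, X_{i+b^2}\} \mid X_i) \ge e_\theta(\{X_{i - \min(a^1,a^2)}, X_{i + \min(b^1,b^2)}\} \mid X_i)$, where $e_\theta(\cdot \mid X_i)$ denotes max-influence. -/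
/-
Given `X_i`, the past and the future of the chain are independent: cutting two trajectories at
a common state at time `i` and swapping their futures preserves the product of their weights.
So for nodes `l < i < r` the likelihood ratio of `(X_l, X_r)` is the product of those of `X_l`
and `X_r`, whence `e({l, r}) ≤ e({l}) + e({r})`. Max-influence is monotone in the observed set,
because the law of `X_A` given `X_i` is a mixture of the laws of `X_{A ∪ {j}}` and a ratio of
sums is at most the largest ratio of summands. The combined quilt takes its left node from one
quilt and its right node from the other, or both from the same one, where nonnegativity of
max-influence suffices.
-/

open Finset

/-- Conditional probability `P(X_A = x0|_A | X_i = u)`. -/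
noncomputable def condSet {k T : ℕ} (q : Fin k → ℝ) (P : Fin k → Fin k → ℝ)
    (A : Finset (Fin (T + 1))) (x0 : Fin (T + 1) → Fin k)
    (i : Fin (T + 1)) (u : Fin k) : ℝ :=
  (∑ x ∈ univ.filter (fun x : Fin (T + 1) → Fin k =>
      (∀ j ∈ A, x j = x0 j) ∧ x i = u), jp q P x) / margNode q P i u

/-- Max-influence `e_θ(X_A | X_i)` of node `X_i` on the set of nodes `X_A` in the
chain: supremum of log likelihood ratios of the conditional distribution of `X_A`
over pairs of positive-probability values of `X_i`. -/
noncomputable def chainMaxInfl {k T : ℕ} (q : Fin k → ℝ) (P : Fin k → Fin k → ℝ)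
    (A : Finset (Fin (T + 1))) (i : Fin (T + 1)) : ℝ :=
  sSup { r : ℝ | ∃ (u v : Fin k) (x0 : Fin (T + 1) → Fin k),
    0 < margNode q P i u ∧ 0 < margNode q P i v ∧
    0 < condSet q P A x0 i u ∧ 0 < condSet q P A x0 i v ∧
    r = Real.log (condSet q P A x0 i u / condSet q P A x0 i v) }

/-- The node `a` steps to the left of `i`. -/
def lnode {T : ℕ} (i : Fin (T + 1)) (a : ℕ) : Fin (T + 1) :=
  ⟨i.val - a, lt_of_le_of_lt (Nat.sub_le _ _) i.isLt⟩

/-- The node `b` steps to the right of `i` (truncated at `T`). -/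
def rnode {T : ℕ} (i : Fin (T + 1)) (b : ℕ) : Fin (T + 1) :=
  ⟨min (i.val + b) T, Nat.lt_succ_of_le (min_le_right _ _)⟩

theorem Finset.exists_sum_div_sum_le_div {ι : Type*} {s : Finset ι} (hs : s.Nonempty)
    (a b : ι → ℝ) (hb : ∀ j ∈ s, 0 < b j) :
    ∃ j ∈ s, (∑ j ∈ s, a j) / (∑ j ∈ s, b j) ≤ a j / b j := by
  have hB : 0 < ∑ j ∈ s, b j := sum_pos hb hs
  have hsum : ∑ j ∈ s, b j * ∑ j ∈ s, a j ≤ ∑ j ∈ s, a j * ∑ j ∈ s, b j := by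
    rw [← sum_mul, ← sum_mul, mul_comm]
  obtain ⟨j, hj, hle⟩ := exists_le_of_sum_le hs hsum
  exact ⟨j, hj, (div_le_div_iff₀ hB (hb j hj)).2 (by linarith)⟩

theorem sSup_nonneg_of_forall_neg_mem {s : Set ℝ} (hs : ∀ x ∈ s, -x ∈ s) : 0 ≤ sSup s := by
  obtain rfl | ⟨x, hx⟩ := s.eq_empty_or_nonempty
  · exact Real.sSup_empty.ge
  · refine Real.sSup_nonneg' ⟨|x|, ?_, abs_nonneg x⟩
    rcases abs_choice x with h | h <;> rw [h]
    exacts [hx, hs x hx]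

section MarkovChain

variable {k T : ℕ} (q : Fin k → ℝ) (P : Fin k → Fin k → ℝ)

noncomputable def jointProb (A : Finset (Fin (T + 1))) (x0 : Fin (T + 1) → Fin k)
    (i : Fin (T + 1)) (u : Fin k) : ℝ :=
  ∑ x ∈ univ.filter (fun x : Fin (T + 1) → Fin k =>
      (∀ j ∈ A, x j = x0 j) ∧ x i = u), jp q P x

theorem condSet_eq_div (A : Finset (Fin (T + 1))) (x0 : Fin (T + 1) → Fin k)
    (i : Fin (T + 1)) (u : Fin k) :
    condSet q P A x0 i u = jointProb q P A x0 i u / margNode q P i u := rfl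

theorem jointProb_eq_sum_update {A : Finset (Fin (T + 1))} {j : Fin (T + 1)} (hj : j ∉ A)
    (x0 : Fin (T + 1) → Fin k) (i : Fin (T + 1)) (u : Fin k) :
    jointProb q P A x0 i u =
      ∑ β, jointProb q P (insert j A) (Function.update x0 j β) i u := by
  unfold jointProb
  rw [← sum_fiberwise (univ.filter fun x : Fin (T + 1) → Fin k => (∀ j ∈ A, x j = x0 j) ∧ x i = u)
    (fun x => x j)]
  refine sum_congr rfl fun β _ => ?_
  rw [filter_filter]
  refine sum_congr (filter_congr fun x _ => ?_) fun _ _ => rfl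
  have hA : ∀ j' ∈ A, Function.update x0 j β j' = x0 j' := fun j' hj' =>
    Function.update_of_ne (ne_of_mem_of_not_mem hj' hj) _ _
  simp only [forall_mem_insert, Function.update_self]
  constructor
  · rintro ⟨⟨hxA, hxi⟩, hxj⟩
    exact ⟨⟨hxj, fun j' hj' => (hxA j' hj').trans (hA j' hj').symm⟩, hxi⟩
  · rintro ⟨⟨hxj, hxA⟩, hxi⟩
    exact ⟨⟨fun j' hj' => (hxA j' hj').trans (hA j' hj'), hxi⟩, hxj⟩

theorem condSet_eq_sum_update {A : Finset (Fin (T + 1))} {j : Fin (T + 1)} (hj : j ∉ A)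
    (x0 : Fin (T + 1) → Fin k) (i : Fin (T + 1)) (u : Fin k) :
    condSet q P A x0 i u =
      ∑ β, condSet q P (insert j A) (Function.update x0 j β) i u := by
  simp only [condSet_eq_div, ← sum_div, jointProb_eq_sum_update q P hj]

def splice (i : Fin (T + 1)) (x y : Fin (T + 1) → Fin k) : Fin (T + 1) → Fin k :=
  fun j => if j ≤ i then x j else y j

theorem splice_of_le {i j : Fin (T + 1)} (h : j ≤ i) (x y : Fin (T + 1) → Fin k) :
    splice i x y j = x j := if_pos h

theorem splice_of_lt {i j : Fin (T + 1)} (h : i < j) (x y : Fin (T + 1) → Fin k) :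
    splice i x y j = y j := if_neg (not_le.2 h)

theorem splice_splice (i : Fin (T + 1)) (x y : Fin (T + 1) → Fin k) :
    splice i (splice i x y) (splice i y x) = x := by
  funext j
  rcases le_or_gt j i with h | h
  · rw [splice_of_le h, splice_of_le h]
  · rw [splice_of_lt h, splice_of_lt h]

theorem transition_mul_splice {i : Fin (T + 1)} {x y : Fin (T + 1) → Fin k} (hxy : x i = y i)
    (t : Fin T) :
    P (x t.castSucc) (x t.succ) * P (y t.castSucc) (y t.succ) =
      P (splice i x y t.castSucc) (splice i x y t.succ) *
        P (splice i y x t.castSucc) (splice i y x t.succ) := by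
  rcases lt_trichotomy t.castSucc i with h | rfl | h
  · have h' : t.succ ≤ i := Fin.castSucc_lt_iff_succ_le.1 h
    rw [splice_of_le h.le, splice_of_le h', splice_of_le h.le, splice_of_le h']
  · have h' : t.castSucc < t.succ := Fin.castSucc_lt_succ
    rw [splice_of_le le_rfl, splice_of_lt h', splice_of_le le_rfl, splice_of_lt h', hxy, mul_comm]
  · have h' : i < t.succ := h.trans Fin.castSucc_lt_succ
    rw [splice_of_lt h, splice_of_lt h', splice_of_lt h, splice_of_lt h', mul_comm]

theorem jp_mul_jp_splice {i : Fin (T + 1)} {x y : Fin (T + 1) → Fin k} (hxy : x i = y i) :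
    jp q P x * jp q P y = jp q P (splice i x y) * jp q P (splice i y x) := by
  have h0 : (0 : Fin (T + 1)) ≤ i := Fin.zero_le i
  simp only [jp, splice_of_le h0]
  rw [mul_mul_mul_comm, ← prod_mul_distrib, mul_mul_mul_comm, ← prod_mul_distrib]
  exact congrArg _ (prod_congr rfl fun t _ => transition_mul_splice P hxy t)

theorem jointProb_union_mul_margNode {A B : Finset (Fin (T + 1))} {i : Fin (T + 1)}
    (hA : ∀ j ∈ A, j ≤ i) (hB : ∀ j ∈ B, i < j) (x0 : Fin (T + 1) → Fin k) (u : Fin k) :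
    jointProb q P (A ∪ B) x0 i u * margNode q P i u =
      jointProb q P A x0 i u * jointProb q P B x0 i u := by
  unfold jointProb margNode
  rw [sum_mul_sum, sum_mul_sum, ← sum_product', ← sum_product']
  refine sum_nbij' (fun p => (splice i p.1 p.2, splice i p.2 p.1))
    (fun p => (splice i p.1 p.2, splice i p.2 p.1)) ?_ ?_ ?_ ?_ ?_
  · rintro ⟨x, y⟩ hxy
    simp only [mem_product, mem_filter, mem_univ, true_and, forall_mem_union] at hxy ⊢
    obtain ⟨⟨⟨hxA, hxB⟩, hxi⟩, hyi⟩ := hxy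
    refine ⟨⟨fun j hj => ?_, ?_⟩, fun j hj => ?_, ?_⟩
    · rw [splice_of_le (hA j hj), hxA j hj]
    · rw [splice_of_le le_rfl, hxi]
    · rw [splice_of_lt (hB j hj), hxB j hj]
    · rw [splice_of_le le_rfl, hyi]
  · rintro ⟨x, y⟩ hxy
    simp only [mem_product, mem_filter, mem_univ, true_and, forall_mem_union] at hxy ⊢
    obtain ⟨⟨hxA, hxi⟩, hyB, hyi⟩ := hxy
    refine ⟨⟨⟨fun j hj => ?_, fun j hj => ?_⟩, ?_⟩, ?_⟩
    · rw [splice_of_le (hA j hj), hxA j hj]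
    · rw [splice_of_lt (hB j hj), hyB j hj]
    · rw [splice_of_le le_rfl, hxi]
    · rw [splice_of_le le_rfl, hyi]
  · rintro ⟨x, y⟩ -
    simp only [splice_splice]
  · rintro ⟨x, y⟩ -
    simp only [splice_splice]
  · rintro ⟨x, y⟩ hxy
    simp only [mem_product, mem_filter, mem_univ, true_and] at hxy
    exact jp_mul_jp_splice q P (hxy.1.2.trans hxy.2.symm)

/-- Conditional independence of the past and the future given the present. -/
theorem condSet_union {A B : Finset (Fin (T + 1))} {i : Fin (T + 1)}
    (hA : ∀ j ∈ A, j ≤ i) (hB : ∀ j ∈ B, i < j) (x0 : Fin (T + 1) → Fin k) {u : Fin k}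
    (hu : margNode q P i u ≠ 0) :
    condSet q P (A ∪ B) x0 i u = condSet q P A x0 i u * condSet q P B x0 i u := by
  rw [condSet_eq_div, condSet_eq_div, condSet_eq_div, div_mul_div_comm,
    ← jointProb_union_mul_margNode q P hA hB, mul_div_mul_right _ _ hu]

end MarkovChain

section MaxInfluence

variable {k T : ℕ} {q : Fin k → ℝ} {P : Fin k → Fin k → ℝ}

theorem le_chainMaxInfl {A : Finset (Fin (T + 1))} {i : Fin (T + 1)} {u v : Fin k}
    {x0 : Fin (T + 1) → Fin k} (hu : 0 < margNode q P i u) (hv : 0 < margNode q P i v)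
    (hxu : 0 < condSet q P A x0 i u) (hxv : 0 < condSet q P A x0 i v) :
    Real.log (condSet q P A x0 i u / condSet q P A x0 i v) ≤ chainMaxInfl q P A i := by
  refine le_csSup ?_ ⟨u, v, x0, hu, hv, hxu, hxv, rfl⟩
  refine ((Set.finite_range fun p : Fin k × Fin k × (Fin (T + 1) → Fin k) =>
    Real.log (condSet q P A p.2.2 i p.1 / condSet q P A p.2.2 i p.2.1)).subset ?_).bddAbove
  rintro _ ⟨u, v, x0, -, -, -, -, rfl⟩
  exact ⟨(u, v, x0), rfl⟩

theorem chainMaxInfl_le {A : Finset (Fin (T + 1))} {i : Fin (T + 1)} {c : ℝ}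
    (h : ∀ u v x0, 0 < margNode q P i u → 0 < margNode q P i v →
      0 < condSet q P A x0 i u → 0 < condSet q P A x0 i v →
      Real.log (condSet q P A x0 i u / condSet q P A x0 i v) ≤ c)
    (hc : 0 ≤ c) : chainMaxInfl q P A i ≤ c := by
  refine Real.sSup_le ?_ hc
  rintro _ ⟨u, v, x0, hu, hv, hxu, hxv, rfl⟩
  exact h u v x0 hu hv hxu hxv

theorem chainMaxInfl_nonneg (A : Finset (Fin (T + 1))) (i : Fin (T + 1)) :
    0 ≤ chainMaxInfl q P A i := by
  refine sSup_nonneg_of_forall_neg_mem ?_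
  rintro _ ⟨u, v, x0, hu, hv, hxu, hxv, rfl⟩
  exact ⟨v, u, x0, hv, hu, hxv, hxu, by rw [← Real.log_inv, inv_div]⟩

variable (hq0 : ∀ s, 0 < q s) (hP0 : ∀ s s', 0 < P s s')
include hq0 hP0

theorem jp_pos (x : Fin (T + 1) → Fin k) : 0 < jp q P x :=
  mul_pos (hq0 _) (prod_pos fun _ _ => hP0 _ _)

theorem margNode_pos (i : Fin (T + 1)) (u : Fin k) : 0 < margNode q P i u :=
  sum_pos (fun x _ => jp_pos hq0 hP0 x) ⟨fun _ => u, by simp⟩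

theorem condSet_pos {A : Finset (Fin (T + 1))} {i : Fin (T + 1)} (hi : i ∉ A)
    (x0 : Fin (T + 1) → Fin k) (u : Fin k) : 0 < condSet q P A x0 i u := by
  refine div_pos (sum_pos (fun x _ => jp_pos hq0 hP0 x) ⟨Function.update x0 i u, ?_⟩)
    (margNode_pos hq0 hP0 i u)
  simp only [mem_filter, mem_univ, true_and, Function.update_self, and_true]
  exact fun j hj => Function.update_of_ne (ne_of_mem_of_not_mem hj hi) _ _

theorem chainMaxInfl_le_insert {A : Finset (Fin (T + 1))} {i j : Fin (T + 1)}
    (hi : i ∉ insert j A) : chainMaxInfl q P A i ≤ chainMaxInfl q P (insert j A) i := by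
  by_cases hj : j ∈ A
  · rw [insert_eq_of_mem hj]
  refine chainMaxInfl_le (fun u v x0 hu hv hxu hxv => ?_) (chainMaxInfl_nonneg _ _)
  have hpos := fun β w => condSet_pos hq0 hP0 hi (Function.update x0 j β) w
  obtain ⟨β, -, hβ⟩ := exists_sum_div_sum_le_div ⟨u, mem_univ u⟩
    (fun β => condSet q P (insert j A) (Function.update x0 j β) i u) _
    (fun β _ => hpos β v)
  rw [← condSet_eq_sum_update q P hj, ← condSet_eq_sum_update q P hj] at hβ
  exact (Real.log_le_log (div_pos hxu hxv) hβ).trans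
    (le_chainMaxInfl hu hv (hpos β u) (hpos β v))

theorem chainMaxInfl_mono {A B : Finset (Fin (T + 1))} {i : Fin (T + 1)} (hAB : A ⊆ B)
    (hi : i ∉ B) : chainMaxInfl q P A i ≤ chainMaxInfl q P B i := by
  rw [← union_sdiff_of_subset hAB] at hi ⊢
  generalize B \ A = C at hi ⊢
  induction C using Finset.induction_on with
  | empty => rw [union_empty]
  | insert j C _ ih =>
    rw [union_insert] at hi ⊢
    exact (ih fun h => hi (mem_insert_of_mem h)).trans (chainMaxInfl_le_insert hq0 hP0 hi)

theorem chainMaxInfl_union_le {A B : Finset (Fin (T + 1))} {i : Fin (T + 1)}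
    (hA : ∀ j ∈ A, j < i) (hB : ∀ j ∈ B, i < j) :
    chainMaxInfl q P (A ∪ B) i ≤ chainMaxInfl q P A i + chainMaxInfl q P B i := by
  have hiA : i ∉ A := fun h => lt_irrefl i (hA i h)
  have hiB : i ∉ B := fun h => lt_irrefl i (hB i h)
  refine chainMaxInfl_le (fun u v x0 hu hv _ _ => ?_)
    (add_nonneg (chainMaxInfl_nonneg _ _) (chainMaxInfl_nonneg _ _))
  have hA' : ∀ j ∈ A, j ≤ i := fun j hj => (hA j hj).le
  have pos : ∀ {C : Finset (Fin (T + 1))}, i ∉ C → ∀ w, 0 < condSet q P C x0 i w :=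
    fun hC w => condSet_pos hq0 hP0 hC x0 w
  rw [condSet_union q P hA' hB x0 hu.ne', condSet_union q P hA' hB x0 hv.ne', ← div_mul_div_comm,
    Real.log_mul (div_pos (pos hiA u) (pos hiA v)).ne' (div_pos (pos hiB u) (pos hiB v)).ne']
  exact add_le_add (le_chainMaxInfl hu hv (pos hiA u) (pos hiA v))
    (le_chainMaxInfl hu hv (pos hiB u) (pos hiB v))

theorem chainMaxInfl_pair_le_add {i l r l' r' : Fin (T + 1)} (hl : l < i) (hr : i < r)
    (hl' : l' < i) (hr' : i < r') :
    chainMaxInfl q P {l, r'} i ≤ chainMaxInfl q P {l, r} i + chainMaxInfl q P {l', r'} i :=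
  calc chainMaxInfl q P {l, r'} i
      ≤ chainMaxInfl q P {l} i + chainMaxInfl q P {r'} i := by
        rw [insert_eq]
        exact chainMaxInfl_union_le hq0 hP0 (by simpa using hl) (by simpa using hr')
    _ ≤ chainMaxInfl q P {l, r} i + chainMaxInfl q P {l', r'} i :=
        add_le_add (chainMaxInfl_mono hq0 hP0 (by simp) (by simp [hl.ne', hr.ne]))
          (chainMaxInfl_mono hq0 hP0 (by simp) (by simp [hl'.ne', hr'.ne]))

end MaxInfluence

theorem lnode_lt {T : ℕ} {i : Fin (T + 1)} {a : ℕ} (ha : 1 ≤ a) (hai : a ≤ i.val) :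
    lnode i a < i :=
  Fin.lt_def.2 (show i.val - a < i.val by omega)

theorem lt_rnode {T : ℕ} {i : Fin (T + 1)} {b : ℕ} (hb : 1 ≤ b) (hbT : i.val + b ≤ T) :
    i < rnode i b :=
  Fin.lt_def.2 (show i.val < min (i.val + b) T by omega)

theorem maxInfl_combined_quilt_subadditive_general {k T : ℕ}
    (q : Fin k → ℝ) (P : Fin k → Fin k → ℝ)
    (hq0 : ∀ s, 0 < q s)
    (hP0 : ∀ s s', 0 < P s s')
    (i : Fin (T + 1)) (a1 a2 b1 b2 : ℕ)
    (ha11 : 1 ≤ a1) (ha12 : a1 ≤ i.val) (ha21 : 1 ≤ a2) (ha22 : a2 ≤ i.val)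
    (hb11 : 1 ≤ b1) (hb12 : i.val + b1 ≤ T) (hb21 : 1 ≤ b2) (hb22 : i.val + b2 ≤ T) :
    chainMaxInfl q P {lnode i (min a1 a2), rnode i (min b1 b2)} i ≤
      chainMaxInfl q P {lnode i a1, rnode i b1} i +
        chainMaxInfl q P {lnode i a2, rnode i b2} i := by
  have hl1 := lnode_lt ha11 ha12
  have hl2 := lnode_lt ha21 ha22
  have hr1 := lt_rnode hb11 hb12
  have hr2 := lt_rnode hb21 hb22
  rcases le_total a1 a2 with ha | ha <;> rcases le_total b1 b2 with hb | hb
  · rw [min_eq_left ha, min_eq_left hb]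
    exact le_add_of_nonneg_right (chainMaxInfl_nonneg _ _)
  · rw [min_eq_left ha, min_eq_right hb]
    exact chainMaxInfl_pair_le_add hq0 hP0 hl1 hr1 hl2 hr2
  · rw [min_eq_right ha, min_eq_left hb]
    exact (chainMaxInfl_pair_le_add hq0 hP0 hl2 hr2 hl1 hr1).trans_eq (add_comm _ _)
  · rw [min_eq_right ha, min_eq_right hb]
    exact le_add_of_nonneg_left (chainMaxInfl_nonneg _ _)

/-- **Subadditivity of max-influence over combined quilts (two-sided chain
version)**: for two two-sided Markov Quilts `{X_{i-a¹}, X_{i+b¹}}` and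
`{X_{i-a²}, X_{i+b²}}` of a node `X_i` of a Markov chain, the sum of their
max-influences is at least the max-influence of the combined (closest) quilt
`{X_{i-min(a¹,a²)}, X_{i+min(b¹,b²)}}`. -/
theorem maxInfl_combined_quilt_subadditive {k T : ℕ}
    (q : Fin k → ℝ) (P : Fin k → Fin k → ℝ)
    (hq0 : ∀ s, 0 < q s) (hq1 : ∑ s, q s = 1)
    (hP0 : ∀ s s', 0 < P s s') (hP1 : ∀ s, ∑ s', P s s' = 1)
    (i : Fin (T + 1)) (a1 a2 b1 b2 : ℕ)
    (ha11 : 1 ≤ a1) (ha12 : a1 ≤ i.val) (ha21 : 1 ≤ a2) (ha22 : a2 ≤ i.val)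
    (hb11 : 1 ≤ b1) (hb12 : i.val + b1 ≤ T) (hb21 : 1 ≤ b2) (hb22 : i.val + b2 ≤ T) :
    chainMaxInfl q P {lnode i (min a1 a2), rnode i (min b1 b2)} i ≤
      chainMaxInfl q P {lnode i a1, rnode i b1} i +
        chainMaxInfl q P {lnode i a2, rnode i b2} i :=
  maxInfl_combined_quilt_subadditive_general q P hq0 hP0 i a1 a2 b1 b2 ha11 ha12 ha21 ha22 hb11 hb12
    hb21 hb22
end
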